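/- Sommerfeld expansion to second order: let h : ℝ → ℝ be C² with h and h' bounded and integrable near -∞ (so that all integrals converge), and let μ ∈ ℝ. Then as T → 0⁺, ∫_{-∞}^{∞} h(ε)·f_FD((ε-μ)/T) dε = ∫_{-∞}^{μ} h(ε) dε + (π²/6)·h'(μ)·T² + o(T²). -/

import Mathlib

open MeasureTheory Filter Asymptotics

noncomputable def fFD (x : ℝ) : ℝ := (Real.exp x + 1)⁻¹

/-!
Writing `x = (ε - μ) / T` and using `fFD (-x) = 1 - fFD x` on the half line `ε ≤ μ`, the
difference between the Fermi–Dirac integral and `∫_{-∞}^μ h` becomes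
`T ∫_0^∞ (h (μ + T x) - h (μ - T x)) fFD x dx`. The symmetric difference quotient
`(h (μ + T x) - h (μ - T x)) / T` tends to `2 h'(μ) x` and is bounded by `2 sup |h'| x`, so by
dominated convergence the difference is `2 h'(μ) T² ∫_0^∞ x fFD x dx + o(T²)`. Expanding
`fFD x = ∑ (-1)ⁿ e^{-(n+1)x}` turns that moment into the Mellin transform value
`Γ(2) η(2) = π² / 12`.
-/

open Real Set Topology

theorem fFD_nonneg (x : ℝ) : 0 ≤ fFD x := by
  unfold fFD; positivity

theorem fFD_le_one (x : ℝ) : fFD x ≤ 1 :=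
  inv_le_one_of_one_le₀ (by linarith [exp_pos x])

theorem fFD_le_exp_neg (x : ℝ) : fFD x ≤ exp (-x) := by
  rw [fFD, exp_neg]
  exact inv_anti₀ (exp_pos x) (by linarith)

theorem fFD_neg (x : ℝ) : fFD (-x) = 1 - fFD x := by
  rw [fFD, fFD, exp_neg]
  field_simp
  ring

@[fun_prop]
theorem continuous_fFD : Continuous fFD :=
  (continuous_exp.add continuous_const).inv₀ fun x => (add_pos (exp_pos x) one_pos).ne'

theorem integrableOn_fFD_Ioi : IntegrableOn fFD (Ioi 0) :=
  (integrableOn_exp_neg_Ioi 0).mono' continuous_fFD.aestronglyMeasurable.restrict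
    (.of_forall fun x => by simpa [abs_of_nonneg (fFD_nonneg x)] using fFD_le_exp_neg x)

theorem integrableOn_mul_fFD_Ioi : IntegrableOn (fun x => x * fFD x) (Ioi 0) := by
  have hdom : IntegrableOn (fun x : ℝ => x * exp (-x)) (Ioi 0) := by
    simpa using integrableOn_rpow_mul_exp_neg_rpow (s := 1) (p := 1) (by norm_num) one_pos
  refine hdom.mono' (continuous_id.mul continuous_fFD).aestronglyMeasurable.restrict ?_
  filter_upwards [ae_restrict_mem measurableSet_Ioi] with x (hx : 0 < x)
  rw [norm_mul, Real.norm_of_nonneg hx.le, Real.norm_of_nonneg (fFD_nonneg x)]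
  exact mul_le_mul_of_nonneg_left (fFD_le_exp_neg x) hx.le

theorem hasSum_fFD {t : ℝ} (ht : 0 < t) :
    HasSum (fun n : ℕ => (-1) ^ n * exp (-(n + 1) * t)) (fFD t) := by
  have hq : |-exp (-t)| < 1 := by
    rw [abs_neg, abs_of_pos (exp_pos _)]
    exact exp_lt_one_iff.mpr (by linarith)
  convert! (hasSum_geometric_of_abs_lt_one hq).mul_left (exp (-t)) using 1
  · funext n
    rw [neg_pow (exp (-t)), ← exp_nat_mul, mul_left_comm, ← exp_add]
    ring_nf
  · simp only [fFD, exp_neg, sub_neg_eq_add]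
    field_simp

theorem hasSum_one_div_succ_sq : HasSum (fun n : ℕ => 1 / ((n : ℝ) + 1) ^ 2) (π ^ 2 / 6) := by
  simpa using (hasSum_nat_add_iff' 1).mpr hasSum_zeta_two

theorem hasSum_neg_one_pow_div_succ_sq :
    HasSum (fun n : ℕ => (-1) ^ n / ((n : ℝ) + 1) ^ 2) (π ^ 2 / 12) := by
  -- `ζ(2) - η(2)` only sees odd `n = 2k + 1`, where its term `2 / (2k + 2)²` is `1 / (2 (k + 1)²)`.
  have hdiff : HasSum (fun n : ℕ => 1 / ((n : ℝ) + 1) ^ 2 - (-1) ^ n / ((n : ℝ) + 1) ^ 2)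
      (0 + π ^ 2 / 12) := by
    refine HasSum.even_add_odd (by simp [pow_mul]) ?_
    convert! hasSum_one_div_succ_sq.mul_left (1 / 2) using 1
    · funext k
      rw [pow_succ (-1 : ℝ), pow_mul]
      push_cast
      field_simp
      ring
    · ring
  convert! hasSum_one_div_succ_sq.sub hdiff using 1
  · funext n; ring
  · ring

theorem integral_mul_fFD_Ioi : ∫ x in Ioi 0, x * fFD x = π ^ 2 / 12 := by
  have hmellin := hasSum_mellin (a := fun n : ℕ => ((-1) ^ n : ℂ)) (p := fun n => (n : ℝ) + 1)
    (F := fun t => (fFD t : ℂ)) (s := 2) (fun n => Or.inr (by positivity)) (by norm_num)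
    (fun t ht => by exact_mod_cast (hasSum_fFD ht))
    (by simpa using hasSum_one_div_succ_sq.summable)
  have hterms : (fun n : ℕ => Complex.Gamma 2 * (-1) ^ n / (((n : ℝ) + 1 : ℝ) : ℂ) ^ (2 : ℂ)) =
      fun n : ℕ => (((-1) ^ n / ((n : ℝ) + 1) ^ 2 : ℝ) : ℂ) := by
    funext n
    rw [Complex.Gamma_ofNat_eq_factorial 1, Complex.cpow_ofNat]
    push_cast
    ring
  have hvalue : mellin (fun t => (fFD t : ℂ)) 2 = ((∫ x in Ioi 0, x * fFD x : ℝ) : ℂ) := by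
    rw [mellin, ← integral_complex_ofReal]
    refine setIntegral_congr_fun measurableSet_Ioi fun t _ => ?_
    norm_num
  rw [hterms, hvalue, Complex.hasSum_ofReal] at hmellin
  exact hmellin.unique hasSum_neg_one_pow_div_succ_sq

theorem integrableOn_fFD_comp_Ioi (μ : ℝ) {T : ℝ} (hT : 0 < T) :
    IntegrableOn (fun ε => fFD ((ε - μ) / T)) (Ioi μ) := by
  refine ((exp_neg_integrableOn_Ioi μ (inv_pos.2 hT)).const_mul (exp (μ / T))).mono'
    (by fun_prop) (.of_forall fun ε => ?_)
  rw [Real.norm_of_nonneg (fFD_nonneg _), ← exp_add]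
  convert fFD_le_exp_neg ((ε - μ) / T) using 2
  field_simp
  ring

section ChangeOfVariables

variable {E : Type*} [NormedAddCommGroup E] [NormedSpace ℝ E]

theorem integral_comp_add_left_Ioi (g : ℝ → E) (a c : ℝ) :
    ∫ x in Ioi a, g (c + x) = ∫ x in Ioi (c + a), g x := by
  have hemb : MeasurableEmbedding (fun x : ℝ => c + x) :=
    (MeasurableEquiv.addLeft c).measurableEmbedding
  rw [← (measurePreserving_add_left volume c).setIntegral_preimage_emb hemb g,
    preimage_const_add_Ioi, add_sub_cancel_left]

theorem integral_comp_add_mul_Ioi (g : ℝ → E) (c : ℝ) {T : ℝ} (hT : 0 < T) :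
    ∫ x in Ioi 0, g (c + T * x) = T⁻¹ • ∫ x in Ioi c, g x := by
  rw [integral_comp_mul_left_Ioi (fun y => g (c + y)) 0 hT, mul_zero, integral_comp_add_left_Ioi,
    add_zero]

theorem integral_comp_sub_mul_Ioi (g : ℝ → E) (c : ℝ) {T : ℝ} (hT : 0 < T) :
    ∫ x in Ioi 0, g (c - T * x) = T⁻¹ • ∫ x in Iic c, g x := by
  simpa [sub_eq_neg_add] using integral_comp_add_mul_Ioi (fun y => g (-y)) (-c) hT

end ChangeOfVariables

section FermiDiracIntegral

variable {h : ℝ → ℝ} {C μ T : ℝ}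

theorem integral_Ioi_mul_fFD_div (hT : 0 < T) :
    ∫ ε in Ioi μ, h ε * fFD ((ε - μ) / T) = T * ∫ x in Ioi 0, h (μ + T * x) * fFD x := by
  have hsub := integral_comp_add_mul_Ioi (fun ε => h ε * fFD ((ε - μ) / T)) μ hT
  simp only [add_sub_cancel_left, mul_div_cancel_left₀ _ hT.ne', smul_eq_mul] at hsub
  rw [hsub, mul_inv_cancel_left₀ hT.ne']

theorem integrableOn_Iic_mul_fFD_div (hint : IntegrableOn h (Iic μ)) (T : ℝ) :
    IntegrableOn (fun ε => h ε * fFD ((ε - μ) / T)) (Iic μ) :=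
  hint.mul_bdd (by fun_prop) (.of_forall fun ε => by
    rw [Real.norm_of_nonneg (fFD_nonneg _)]
    exact fFD_le_one _)

theorem integrableOn_Ioi_mul_fFD_div (hcont : Continuous h) (hC : ∀ x, |h x| ≤ C) (hT : 0 < T) :
    IntegrableOn (fun ε => h ε * fFD ((ε - μ) / T)) (Ioi μ) :=
  (integrableOn_fFD_comp_Ioi μ hT).bdd_mul hcont.aestronglyMeasurable.restrict
    (.of_forall fun ε => hC ε)

theorem integral_Iic_mul_fFD_div_sub (hint : IntegrableOn h (Iic μ)) (hT : 0 < T) :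
    (∫ ε in Iic μ, h ε * fFD ((ε - μ) / T)) - ∫ ε in Iic μ, h ε =
      -(T * ∫ x in Ioi 0, h (μ - T * x) * fFD x) := by
  have hsub := integral_comp_sub_mul_Ioi (fun ε => h ε * fFD ((μ - ε) / T)) μ hT
  simp only [sub_sub_cancel, mul_div_cancel_left₀ _ hT.ne', smul_eq_mul] at hsub
  have hreflect : ∀ ε, h ε * fFD ((ε - μ) / T) - h ε = -(h ε * fFD ((μ - ε) / T)) := by
    intro ε
    rw [← neg_sub μ ε, neg_div, fFD_neg]
    ring
  rw [← integral_sub (integrableOn_Iic_mul_fFD_div hint T) hint]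
  simp only [hreflect, integral_neg, hsub, mul_inv_cancel_left₀ hT.ne']

theorem integrableOn_comp_mul_fFD_Ioi {g : ℝ → ℝ} (hcont : Continuous g) (hC : ∀ x, |g x| ≤ C) :
    IntegrableOn (fun x => g x * fFD x) (Ioi 0) :=
  integrableOn_fFD_Ioi.bdd_mul hcont.aestronglyMeasurable.restrict (.of_forall fun x => hC x)

theorem integral_mul_fFD_div_sub_integral_Iic (hcont : Continuous h) (hC : ∀ x, |h x| ≤ C)
    (hint : IntegrableOn h (Iic μ)) (hT : 0 < T) :
    (∫ ε, h ε * fFD ((ε - μ) / T)) - ∫ ε in Iic μ, h ε =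
      T * ∫ x in Ioi 0, (h (μ + T * x) - h (μ - T * x)) * fFD x := by
  have hplus := integrableOn_comp_mul_fFD_Ioi (g := fun x => h (μ + T * x)) (by fun_prop)
    fun x => hC _
  have hminus := integrableOn_comp_mul_fFD_Ioi (g := fun x => h (μ - T * x)) (by fun_prop)
    fun x => hC _
  rw [← intervalIntegral.integral_Iic_add_Ioi (integrableOn_Iic_mul_fFD_div hint T)
    (integrableOn_Ioi_mul_fFD_div hcont hC hT), add_sub_right_comm,
    integral_Iic_mul_fFD_div_sub hint hT, integral_Ioi_mul_fFD_div hT]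
  simp only [sub_mul]
  rw [integral_sub hplus hminus]
  ring

theorem sommerfeld_remainder_eq (hcont : Continuous h) (hC : ∀ x, |h x| ≤ C)
    (hint : IntegrableOn h (Iic μ)) (hT : 0 < T) (d : ℝ) :
    (∫ ε, h ε * fFD ((ε - μ) / T)) - ((∫ ε in Iic μ, h ε) + π ^ 2 / 6 * d * T ^ 2) =
      T ^ 2 * ∫ x in Ioi 0, ((h (μ + T * x) - h (μ - T * x)) / T - 2 * d * x) * fFD x := by
  have hdiff := integrableOn_comp_mul_fFD_Ioi (g := fun x => h (μ + T * x) - h (μ - T * x))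
    (C := 2 * C) (by fun_prop) fun x =>
      (abs_sub _ _).trans (by linarith [hC (μ + T * x), hC (μ - T * x)])
  have hsplit : ∫ x in Ioi 0, ((h (μ + T * x) - h (μ - T * x)) / T - 2 * d * x) * fFD x =
      T⁻¹ * (∫ x in Ioi 0, (h (μ + T * x) - h (μ - T * x)) * fFD x) - 2 * d * (π ^ 2 / 12) := by
    rw [← integral_mul_fFD_Ioi, ← integral_const_mul, ← integral_const_mul,
      ← integral_sub (hdiff.const_mul _) (integrableOn_mul_fFD_Ioi.const_mul _)]
    refine setIntegral_congr_fun measurableSet_Ioi fun x _ => ?_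
    ring
  rw [sub_add_eq_sub_sub, integral_mul_fFD_div_sub_integral_Iic hcont hC hint hT, hsplit]
  field_simp
  ring

end FermiDiracIntegral

theorem HasDerivAt.tendsto_symmetric_slope {f : ℝ → ℝ} {f' a : ℝ} (hf : HasDerivAt f f' a)
    (x : ℝ) :
    Tendsto (fun t => (f (a + t * x) - f (a - t * x)) / t) (𝓝[≠] 0) (𝓝 (2 * f' * x)) := by
  have hf0 : ∀ y, HasDerivAt f f' (a + 0 * y) := by simpa using hf
  have hplus : HasDerivAt (fun t => f (a + t * x)) (f' * x) 0 := by
    simpa [Function.comp_def] using (hf0 x).comp 0 ((hasDerivAt_mul_const x).const_add a)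
  have hminus : HasDerivAt (fun t => f (a - t * x)) (-(f' * x)) 0 := by
    simpa [Function.comp_def, sub_eq_add_neg] using
      (hf0 (-x)).comp 0 ((hasDerivAt_mul_const (-x)).const_add a)
  convert (hplus.sub hminus).tendsto_slope_zero using 1
  · funext t
    simp [div_eq_inv_mul]
  · ring_nf

theorem abs_sub_le_of_abs_deriv_le {f : ℝ → ℝ} {C : ℝ} (hf : Differentiable ℝ f)
    (hC : ∀ x, |deriv f x| ≤ C) (a b : ℝ) : |f a - f b| ≤ C * |a - b| :=
  convex_univ.norm_image_sub_le_of_norm_deriv_le (fun x _ => hf x) (fun x _ => hC x)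
    (mem_univ b) (mem_univ a)

theorem tendsto_integral_symmetric_slope_sub_mul {h w : ℝ → ℝ} {C : ℝ} (hd : Differentiable ℝ h)
    (hC : ∀ x, |deriv h x| ≤ C) (hw : Continuous w)
    (hxw : IntegrableOn (fun x => x * w x) (Ioi 0)) (μ : ℝ) :
    Tendsto (fun T => ∫ x in Ioi 0, ((h (μ + T * x) - h (μ - T * x)) / T
      - 2 * deriv h μ * x) * w x) (𝓝[Ioi 0] 0) (𝓝 0) := by
  have hcont := hd.continuous
  have hbound : ∀ T > 0, ∀ x, ‖((h (μ + T * x) - h (μ - T * x)) / T - 2 * deriv h μ * x) * w x‖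
      ≤ 4 * C * ‖x * w x‖ := by
    intro T hT x
    have hquot : |(h (μ + T * x) - h (μ - T * x)) / T| ≤ 2 * C * |x| := by
      rw [abs_div, abs_of_pos hT, div_le_iff₀ hT]
      calc _ ≤ C * |μ + T * x - (μ - T * x)| := abs_sub_le_of_abs_deriv_le hd hC _ _
        _ = 2 * C * |x| * T := by
          rw [show μ + T * x - (μ - T * x) = 2 * T * x by ring, abs_mul, abs_mul,
            abs_of_pos hT]
          norm_num
          ring
    have hlin : |2 * deriv h μ * x| ≤ 2 * C * |x| := by
      rw [abs_mul, abs_mul, abs_two]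
      gcongr
      exact hC μ
    simp only [norm_mul, Real.norm_eq_abs]
    calc _ ≤ (2 * C * |x| + 2 * C * |x|) * |w x| :=
          mul_le_mul_of_nonneg_right ((abs_sub _ _).trans (add_le_add hquot hlin)) (abs_nonneg _)
      _ = _ := by ring
  have hlim : ∀ x, Tendsto (fun T => ((h (μ + T * x) - h (μ - T * x)) / T
      - 2 * deriv h μ * x) * w x) (𝓝[Ioi 0] 0) (𝓝 0) := by
    intro x
    have hslope := ((hd μ).hasDerivAt.tendsto_symmetric_slope x).mono_left (nhdsGT_le_nhdsNE 0)
    simpa using (hslope.sub_const (2 * deriv h μ * x)).mul_const (w x)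
  simpa using tendsto_integral_filter_of_dominated_convergence (l := 𝓝[Ioi 0] 0) _
    (Eventually.of_forall fun T => by fun_prop)
    (eventually_mem_nhdsWithin.mono fun T hT => ae_of_all _ (hbound T hT))
    (hxw.norm.const_mul (4 * C)) (ae_of_all _ hlim)

theorem sommerfeld_expansion_second_order_general
    (h : ℝ → ℝ) (μ : ℝ)
    (hC2 : ContDiff ℝ 2 h)
    (hb : ∃ C : ℝ, ∀ x, |h x| ≤ C)
    (hb' : ∃ C : ℝ, ∀ x, |deriv h x| ≤ C)
    (hint : IntegrableOn h (Set.Iic μ)) :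
    (fun T : ℝ =>
        (∫ ε : ℝ, h ε * fFD ((ε - μ) / T)) -
          ((∫ ε in Set.Iic μ, h ε) + Real.pi ^ 2 / 6 * deriv h μ * T ^ 2))
      =o[nhdsWithin 0 (Set.Ioi 0)] fun T : ℝ => T ^ 2 := by
  obtain ⟨C, hC⟩ := hb
  obtain ⟨C', hC'⟩ := hb'
  have hd : Differentiable ℝ h := hC2.differentiable (by norm_num)
  have hlim := tendsto_integral_symmetric_slope_sub_mul hd hC' continuous_fFD
    integrableOn_mul_fFD_Ioi μ
  refine (((isLittleO_one_iff ℝ).2 hlim).mul_isBigO (isBigO_refl (fun T : ℝ => T ^ 2) _)).congr'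
    ?_ (by simp)
  filter_upwards [self_mem_nhdsWithin] with T hT
  rw [sommerfeld_remainder_eq hd.continuous hC hint hT, mul_comm]

theorem sommerfeld_expansion_second_order
    (h : ℝ → ℝ) (μ : ℝ)
    (hC2 : ContDiff ℝ 2 h)
    (hb : ∃ C : ℝ, ∀ x, |h x| ≤ C)
    (hb' : ∃ C : ℝ, ∀ x, |deriv h x| ≤ C)
    (hint : IntegrableOn h (Set.Iic μ))
    (hint' : IntegrableOn (deriv h) (Set.Iic μ)) :
    (fun T : ℝ =>
        (∫ ε : ℝ, h ε * fFD ((ε - μ) / T)) -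
          ((∫ ε in Set.Iic μ, h ε) + Real.pi ^ 2 / 6 * deriv h μ * T ^ 2))
      =o[nhdsWithin 0 (Set.Ioi 0)] fun T : ℝ => T ^ 2 :=
  sommerfeld_expansion_second_order_general h μ hC2 hb hb' hint
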